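/- Let α > 0, let c : ℝ → (0,∞) be continuous, and let Φ_c(x) = ∫₀^x dw/c(w). Then the function v(x,t) = (1/(B(α,1/2) · t)) · (1 − Φ_c(x)²/t²)^{α−1} satisfies the Euler–Poisson–Darboux equation with space-varying velocity ∂²v/∂t² + (2α/t) ∂v/∂t = c(x) ∂/∂x( c(x) ∂v/∂x ) for all (x,t) with t > 0 and |Φ_c(x)| < t. -/

import Mathlib

open Real MeasureTheory

/-- The Euler Beta function, `B(a,b) = Γ(a)Γ(b)/Γ(a+b)`. -/
noncomputable def betaFn (a b : ℝ) : ℝ := Real.Gamma a * Real.Gamma b / Real.Gamma (a + b)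

/-- `Φ_c x = ∫₀ˣ dw / c(w)`. -/
noncomputable def Phi (c : ℝ → ℝ) (x : ℝ) : ℝ := ∫ w in (0:ℝ)..x, (c w)⁻¹

/-! Since `Φ_c' = 1 / c`, the operator `c ∂ₓ (c ∂ₓ ·)` acting on a function of `Φ_c x` is the
plain second derivative in `u = Φ_c x`. As `v (x, t) = B(α, 1/2)⁻¹ K (Φ_c x, t)` with
`K (u, t) = t⁻¹ (1 - u² / t²)^(α - 1)`, the claim reduces to the constant-velocity equation
`K_tt + (2α / t) K_t = K_uu` on the cone `|u| < t`, which is a direct computation. -/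

open Filter Topology

theorem iteratedDeriv_two_eq_of_hasDerivAt {f f' : ℝ → ℝ} {x a : ℝ}
    (hf : ∀ᶠ y in 𝓝 x, HasDerivAt f (f' y) y) (hf' : HasDerivAt f' a x) :
    iteratedDeriv 2 f x = a := by
  have hderiv : deriv f =ᶠ[𝓝 x] f' := hf.mono fun y hy => hy.deriv
  rw [iteratedDeriv_succ, iteratedDeriv_one, hderiv.deriv_eq, hf'.deriv]

theorem hasDerivAt_Phi {c : ℝ → ℝ} (hc : Continuous c) (hc0 : ∀ y, c y ≠ 0) (x : ℝ) :
    HasDerivAt (Phi c) (c x)⁻¹ x :=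
  have hinv : Continuous fun w => (c w)⁻¹ := hc.inv₀ hc0
  intervalIntegral.integral_hasDerivAt_right (hinv.intervalIntegrable _ _)
    hinv.stronglyMeasurable.stronglyMeasurableAtFilter hinv.continuousAt

theorem mul_deriv_mul_deriv_comp {c Φ F F' : ℝ → ℝ} {x a : ℝ}
    (hΦ : ∀ᶠ y in 𝓝 x, HasDerivAt Φ (c y)⁻¹ y) (hc : ∀ᶠ y in 𝓝 x, c y ≠ 0)
    (hF : ∀ᶠ w in 𝓝 (Φ x), HasDerivAt F (F' w) w) (hF' : HasDerivAt F' a (Φ x)) :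
    c x * deriv (fun y => c y * deriv (fun z => F (Φ z)) y) x = a := by
  have hF_near : ∀ᶠ y in 𝓝 x, HasDerivAt F (F' (Φ y)) (Φ y) :=
    hΦ.self_of_nhds.continuousAt.eventually hF
  have hflux : (fun y => c y * deriv (fun z => F (Φ z)) y) =ᶠ[𝓝 x] fun y => F' (Φ y) := by
    filter_upwards [hΦ, hc, hF_near] with y hΦy hcy hFy
    rw [← Function.comp_def, (hFy.comp y hΦy).deriv]
    field_simp
  rw [hflux.deriv_eq, ← Function.comp_def, (hF'.comp x hΦ.self_of_nhds).deriv]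
  field_simp [hc.self_of_nhds]

noncomputable def epdKernel (α u t : ℝ) : ℝ := t⁻¹ * (1 - u ^ 2 / t ^ 2) ^ (α - 1)

section EpdKernel

variable {u t : ℝ}

theorem one_sub_sq_div_sq_pos (h : |u| < t) : 0 < 1 - u ^ 2 / t ^ 2 := by
  have ht : 0 < t := (abs_nonneg u).trans_lt h
  rw [sub_pos, div_lt_one (by positivity)]
  exact sq_lt_sq' (abs_lt.mp h).1 (abs_lt.mp h).2

variable (p : ℝ)

theorem hasDerivAt_one_sub_sq_div_sq_rpow_time (h : |u| < t) :
    HasDerivAt (fun s => (1 - u ^ 2 / s ^ 2) ^ p)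
      (2 * u ^ 2 / t ^ 3 * p * (1 - u ^ 2 / t ^ 2) ^ (p - 1)) t := by
  have ht : t ≠ 0 := ((abs_nonneg u).trans_lt h).ne'
  refine ((((hasDerivAt_const t (u ^ 2)).fun_div (hasDerivAt_pow 2 t)
    (pow_ne_zero 2 ht)).const_sub 1).rpow_const
    (Or.inl (one_sub_sq_div_sq_pos h).ne')).congr_deriv ?_
  field_simp
  ring

theorem hasDerivAt_one_sub_sq_div_sq_rpow_space (h : |u| < t) :
    HasDerivAt (fun w => (1 - w ^ 2 / t ^ 2) ^ p)
      (-(2 * u / t ^ 2) * p * (1 - u ^ 2 / t ^ 2) ^ (p - 1)) u := by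
  refine (((hasDerivAt_pow 2 u).div_const (t ^ 2)).const_sub 1).rpow_const
    (Or.inl (one_sub_sq_div_sq_pos h).ne') |>.congr_deriv ?_
  ring

variable (α : ℝ)

theorem hasDerivAt_epdKernel_time (h : |u| < t) :
    HasDerivAt (epdKernel α u)
      ((α - 1) * (2 * u ^ 2 / t ^ 4) * (1 - u ^ 2 / t ^ 2) ^ (α - 2)
        - (1 - u ^ 2 / t ^ 2) ^ (α - 1) / t ^ 2) t := by
  have ht : t ≠ 0 := ((abs_nonneg u).trans_lt h).ne'
  refine ((hasDerivAt_inv ht).mul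
    (hasDerivAt_one_sub_sq_div_sq_rpow_time (α - 1) h)).congr_deriv ?_
  rw [show α - 1 - 1 = α - 2 by ring]
  field_simp
  ring

theorem hasDerivAt_epdKernel_time_deriv (h : |u| < t) :
    HasDerivAt (fun s => (α - 1) * (2 * u ^ 2 / s ^ 4) * (1 - u ^ 2 / s ^ 2) ^ (α - 2)
        - (1 - u ^ 2 / s ^ 2) ^ (α - 1) / s ^ 2)
      (2 / t ^ 3 * (1 - u ^ 2 / t ^ 2) ^ (α - 1)
        - 10 * (α - 1) * u ^ 2 / t ^ 5 * (1 - u ^ 2 / t ^ 2) ^ (α - 2)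
        + 4 * (α - 1) * (α - 2) * u ^ 4 / t ^ 7 * (1 - u ^ 2 / t ^ 2) ^ (α - 3)) t := by
  have ht : t ≠ 0 := ((abs_nonneg u).trans_lt h).ne'
  refine ((((hasDerivAt_const t (2 * u ^ 2)).fun_div (hasDerivAt_pow 4 t)
    (pow_ne_zero 4 ht)).const_mul (α - 1) |>.mul
      (hasDerivAt_one_sub_sq_div_sq_rpow_time (α - 2) h)).sub
    ((hasDerivAt_one_sub_sq_div_sq_rpow_time (α - 1) h).fun_div (hasDerivAt_pow 2 t)
      (pow_ne_zero 2 ht))).congr_deriv ?_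
  rw [show α - 1 - 1 = α - 2 by ring, show α - 2 - 1 = α - 3 by ring]
  field_simp
  ring

theorem hasDerivAt_epdKernel_space (h : |u| < t) :
    HasDerivAt (fun w => epdKernel α w t)
      (-(α - 1) * (2 * u / t ^ 3) * (1 - u ^ 2 / t ^ 2) ^ (α - 2)) u := by
  refine ((hasDerivAt_one_sub_sq_div_sq_rpow_space (α - 1) h).const_mul t⁻¹).congr_deriv ?_
  rw [show α - 1 - 1 = α - 2 by ring]
  field_simp

theorem hasDerivAt_epdKernel_space_deriv (h : |u| < t) :
    HasDerivAt (fun w => -(α - 1) * (2 * w / t ^ 3) * (1 - w ^ 2 / t ^ 2) ^ (α - 2))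
      (-(α - 1) * (2 / t ^ 3) * (1 - u ^ 2 / t ^ 2) ^ (α - 2)
        + (α - 1) * (α - 2) * (4 * u ^ 2 / t ^ 5) * (1 - u ^ 2 / t ^ 2) ^ (α - 3)) u := by
  refine ((((hasDerivAt_id' u).const_mul 2).div_const (t ^ 3)).const_mul (-(α - 1)) |>.mul
    (hasDerivAt_one_sub_sq_div_sq_rpow_space (α - 2) h)).congr_deriv ?_
  rw [show α - 2 - 1 = α - 3 by ring]
  field_simp
  ring

theorem epdKernel_derivs_solve_epd (h : |u| < t) :
    (2 / t ^ 3 * (1 - u ^ 2 / t ^ 2) ^ (α - 1)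
        - 10 * (α - 1) * u ^ 2 / t ^ 5 * (1 - u ^ 2 / t ^ 2) ^ (α - 2)
        + 4 * (α - 1) * (α - 2) * u ^ 4 / t ^ 7 * (1 - u ^ 2 / t ^ 2) ^ (α - 3))
      + 2 * α / t * ((α - 1) * (2 * u ^ 2 / t ^ 4) * (1 - u ^ 2 / t ^ 2) ^ (α - 2)
        - (1 - u ^ 2 / t ^ 2) ^ (α - 1) / t ^ 2)
      = -(α - 1) * (2 / t ^ 3) * (1 - u ^ 2 / t ^ 2) ^ (α - 2)
        + (α - 1) * (α - 2) * (4 * u ^ 2 / t ^ 5) * (1 - u ^ 2 / t ^ 2) ^ (α - 3) := by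
  have ht : t ≠ 0 := ((abs_nonneg u).trans_lt h).ne'
  have hg := one_sub_sq_div_sq_pos h
  rw [show α - 1 = α - 3 + 2 by ring, show α - 2 = α - 3 + 1 by ring, rpow_add hg, rpow_add hg,
    rpow_two, rpow_one]
  field_simp
  ring

end EpdKernel

theorem EPD_space_varying_velocity_solution_general
    (α : ℝ)
    (c : ℝ → ℝ) (hc : Continuous c) (hcpos : ∀ x, 0 < c x)
    (v : ℝ → ℝ → ℝ)
    (hv : ∀ x, ∀ t : ℝ,
      v x t = (1 / (betaFn α (1/2) * t)) * (1 - (Phi c x)^2 / t^2) ^ (α - 1)) :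
    ∀ x t : ℝ, 0 < t → |Phi c x| < t →
      iteratedDeriv 2 (fun s => v x s) t + (2*α/t) * deriv (fun s => v x s) t
        = c x * deriv (fun y => c y * deriv (fun z => v z t) y) x := by
  intro x t _ hxt
  set C := (betaFn α (1/2))⁻¹
  obtain rfl : v = fun y s => C * epdKernel α (Phi c y) s := by
    ext y s
    rw [hv, epdKernel, one_div, mul_inv, mul_assoc]
  have hΦ := hasDerivAt_Phi hc fun y => (hcpos y).ne'
  rw [iteratedDeriv_two_eq_of_hasDerivAt ?time
      ((hasDerivAt_epdKernel_time_deriv α hxt).const_mul C),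
    ((hasDerivAt_epdKernel_time α hxt).const_mul C).deriv,
    mul_deriv_mul_deriv_comp (F := fun w => C * epdKernel α w t) (.of_forall hΦ)
      (.of_forall fun y => (hcpos y).ne') ?space
      ((hasDerivAt_epdKernel_space_deriv α hxt).const_mul C)]
  case time =>
    filter_upwards [eventually_gt_nhds hxt] with s hs
    exact (hasDerivAt_epdKernel_time α hs).const_mul C
  case space =>
    filter_upwards [(continuous_abs.isOpen_preimage _ isOpen_Iio).mem_nhds hxt] with w hw
    exact (hasDerivAt_epdKernel_space α hw).const_mul C
  linear_combination C * epdKernel_derivs_solve_epd α hxt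

theorem EPD_space_varying_velocity_solution
    (α : ℝ) (hα : 0 < α)
    (c : ℝ → ℝ) (hc : Continuous c) (hcpos : ∀ x, 0 < c x)
    (v : ℝ → ℝ → ℝ)
    (hv : ∀ x, ∀ t : ℝ,
      v x t = (1 / (betaFn α (1/2) * t)) * (1 - (Phi c x)^2 / t^2) ^ (α - 1)) :
    ∀ x t : ℝ, 0 < t → |Phi c x| < t →
      iteratedDeriv 2 (fun s => v x s) t + (2*α/t) * deriv (fun s => v x s) t
        = c x * deriv (fun y => c y * deriv (fun z => v z t) y) x :=
  EPD_space_varying_velocity_solution_general α c hc hcpos v hv
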